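/- Let ψ_{ast} be continuous shearlets generated by ψ with ψ̂ ∈ C₀^∞ and ψ(0) ≠ 0. Then the continuous shearlet transform of the Dirac delta δ satisfies: SH_δ(a,s,0) = ⟨δ, ψ_{as0}⟩ = a^{-3/4} ψ(0), hence SH_δ(a,s,0) ∼ a^{-3/4} as a → 0; and for t ≠ 0, SH_δ(a,s,t) = O(aᵏ) as a → 0 for every k ≥ 0. -/

import Mathlib

noncomputable section
open MeasureTheory Real Set

abbrev E2 := EuclideanSpace ℝ (Fin 2)

def v2 (x y : ℝ) : E2 := (WithLp.equiv 2 (Fin 2 → ℝ)).symm ![x, y]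

def Minv (a s : ℝ) (v : E2) : E2 := v2 ((v 0 + s * v 1) / a) (v 1 / Real.sqrt a)

/-- Real-valued continuous shearlet `ψ_{ast}(x) = a^{-3/4} ψ(M_{as}⁻¹(x−t))`. -/
def shearletR (ψ : E2 → ℝ) (a s : ℝ) (t : E2) (x : E2) : ℝ :=
  a ^ (-(3:ℝ)/4) * ψ (Minv a s (x - t))

/-- The continuous shearlet transform of the Dirac delta:
`SH_δ(a,s,t) = ⟨δ, ψ_{ast}⟩ = ψ_{ast}(0)`. -/
def SHdelta (ψ : E2 → ℝ) (a s : ℝ) (t : E2) : ℝ := shearletR ψ a s t 0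

lemma Minv_zero (a s : ℝ) : Minv a s 0 = 0 := by
  ext i; fin_cases i <;> simp [Minv, v2]

lemma coord_sq_le (y : E2) (i : Fin 2) : (y i)^2 ≤ ‖y‖^2 := by
  rw [EuclideanSpace.norm_eq, Real.sq_sqrt (by positivity), Fin.sum_univ_two]
  fin_cases i <;> simp [sq_abs] <;> nlinarith [sq_nonneg (y 0), sq_nonneg (y 1)]

/-- `SH_δ(a,s,0) = a^{-3/4} ψ(0) ∼ a^{-3/4}` as `a → 0`, while for
`t ≠ 0`, `SH_δ(a,s,t) = O(aᵏ)` as `a → 0` for every `k`. -/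
theorem shearlet_transform_dirac
    (ψ : E2 → ℝ)
    (hdec : ∀ k : ℕ, ∃ C : ℝ, ∀ y : E2, |ψ y| ≤ C * ((1 + ‖y‖ ^ 2) ^ k)⁻¹)
    (hψ0 : ψ 0 ≠ 0) :
    (∀ a s : ℝ, 0 < a → SHdelta ψ a s 0 = a ^ (-(3:ℝ)/4) * ψ 0) ∧
    (∀ s : ℝ, ∃ c₁ c₂ : ℝ, 0 < c₁ ∧ 0 < c₂ ∧ ∀ a ∈ Set.Ioc (0:ℝ) 1,
        c₁ * a ^ (-(3:ℝ)/4) ≤ |SHdelta ψ a s 0| ∧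
        |SHdelta ψ a s 0| ≤ c₂ * a ^ (-(3:ℝ)/4)) ∧
    (∀ t : E2, t ≠ 0 → ∀ s : ℝ, ∀ k : ℕ, ∃ C : ℝ, ∀ a ∈ Set.Ioc (0:ℝ) 1,
        |SHdelta ψ a s t| ≤ C * a ^ k) := by
  have key : ∀ a s : ℝ, SHdelta ψ a s 0 = a ^ (-(3:ℝ)/4) * ψ 0 := by
    intro a s
    simp [SHdelta, shearletR, Minv_zero]
  refine ⟨fun a s _ => key a s, ?_, ?_⟩
  · intro s
    refine ⟨|ψ 0|, |ψ 0|, abs_pos.mpr hψ0, abs_pos.mpr hψ0, ?_⟩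
    rintro a ⟨ha, _⟩
    have h : |SHdelta ψ a s 0| = |ψ 0| * a ^ (-(3:ℝ)/4) := by
      rw [key a s, abs_mul, abs_of_nonneg (Real.rpow_nonneg ha.le _), mul_comm]
    rw [h]
    exact ⟨le_refl _, le_refl _⟩
  · intro t ht s k
    obtain ⟨C, hC⟩ := hdec (k + 1)
    have hC0 : 0 ≤ C := by
      have := hC 0
      simp at this
      exact le_trans (abs_nonneg _) this
    -- the nonzero coordinate of t
    have ht01 : t 0 ≠ 0 ∨ t 1 ≠ 0 := by
      by_contra h
      push_neg at h
      apply ht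
      ext i; fin_cases i <;> simp [h.1, h.2]
    set c : ℝ := if t 1 = 0 then (t 0)^2 else (t 1)^2 with hc
    have hcpos : 0 < c := by
      rw [hc]; split_ifs with h1
      · rcases ht01 with h | h
        · positivity
        · exact absurd h1 h
      · positivity
    refine ⟨C / c ^ (k+1), ?_⟩
    rintro a ⟨ha, ha1⟩
    set y : E2 := Minv a s (0 - t) with hy
    -- lower bound on ‖y‖²
    have hlb : c / a ≤ 1 + ‖y‖^2 := by
      have h1 : y 1 = (-(t 1)) / Real.sqrt a := by
        simp [hy, Minv, v2]
      have h0 : y 0 = (-(t 0) + s * (-(t 1))) / a := by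
        simp [hy, Minv, v2]
      rcases eq_or_ne (t 1) 0 with h1z | h1z
      · -- use first coordinate: y 0 = -t0 / a
        have hc' : c = (t 0)^2 := by rw [hc, if_pos h1z]
        have hy0 : (y 0)^2 = (t 0)^2 / a^2 := by
          rw [h0, h1z]; field_simp; ring
        have hle : (t 0)^2 / a ≤ (t 0)^2 / a^2 := by
          apply div_le_div_of_nonneg_left (by positivity) (by positivity)
          nlinarith
        have := coord_sq_le y 0
        rw [hy0] at this
        rw [hc']
        nlinarith [sq_nonneg (y 1)]
      · have hc' : c = (t 1)^2 := by rw [hc, if_neg h1z]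
        have hy1 : (y 1)^2 = (t 1)^2 / a := by
          rw [h1, div_pow, neg_sq, Real.sq_sqrt ha.le]
        have := coord_sq_le y 1
        rw [hy1] at this
        rw [hc']
        linarith
    have hca : 0 < c / a := div_pos hcpos ha
    have hpow : (((1 + ‖y‖^2) ^ (k+1) : ℝ))⁻¹ ≤ (((c / a) ^ (k+1) : ℝ))⁻¹ := by
      apply inv_anti₀ (by positivity)
      exact pow_le_pow_left₀ hca.le hlb _
    have hψy : |ψ y| ≤ C * (a ^ (k+1) / c ^ (k+1)) := by
      calc |ψ y| ≤ C * ((1 + ‖y‖^2) ^ (k+1))⁻¹ := hC y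
        _ ≤ C * ((c/a)^(k+1))⁻¹ := mul_le_mul_of_nonneg_left hpow hC0
        _ = C * (a^(k+1)/c^(k+1)) := by rw [div_pow, inv_div]
    have hSH : |SHdelta ψ a s t| = a ^ (-(3:ℝ)/4) * |ψ y| := by
      rw [SHdelta, shearletR, abs_mul, abs_of_nonneg (Real.rpow_nonneg ha.le _), hy]
    have hexp : a ^ (-(3:ℝ)/4) * a ^ (k+1) ≤ a ^ k := by
      have h1 : a ^ (k+1) = a ^ (((k:ℝ)+1)) := by
        rw [← Real.rpow_natCast a (k+1)]; push_cast; ring_nf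
      have h2 : (a : ℝ) ^ (k : ℕ) = a ^ ((k : ℕ) : ℝ) := (Real.rpow_natCast a k).symm
      rw [h1, h2, ← Real.rpow_add ha]
      apply Real.rpow_le_rpow_of_exponent_ge ha ha1
      push_cast; linarith
    rw [hSH]
    calc a ^ (-(3:ℝ)/4) * |ψ y|
        ≤ a ^ (-(3:ℝ)/4) * (C * (a^(k+1)/c^(k+1))) :=
          mul_le_mul_of_nonneg_left hψy (Real.rpow_nonneg ha.le _)
      _ = C / c^(k+1) * (a ^ (-(3:ℝ)/4) * a^(k+1)) := by ring
      _ ≤ C / c^(k+1) * a^k :=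
          mul_le_mul_of_nonneg_left hexp (div_nonneg hC0 (by positivity))
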